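/- arXiv:math/0307025 — 2 statements merged into one kernel-verified Lean document; each statement's English description precedes it below -/
import Mathlib

section
/- Let (V,0) = (f⁻¹(0),0) ⊂ (ℂⁿ,0) be a hypersurface germ with f ∈ m_x·J_f at a point x (where J_f is the Jacobian ideal and m_x the maximal ideal at x). Then the logarithmic tangent space T^{log}_x V := {ζ(x) : ζ ∈ Der(−log V)_x} equals the evaluation Der(−log f)(x) := {ζ(x) : ζ ∈ Der(−log f)_x}, and this equality holds for every choice uf of equation of V with u a unit. -/
open MvPolynomial

variable (n : ℕ)

/-- Applying a vector field `ζ = (ζ₁, …, ζₙ)` to a function `f`:  `ζ·f = ∑ ζᵢ ∂f/∂xᵢ`. -/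
noncomputable def applyVF (f : MvPolynomial (Fin n) ℂ) :
    (Fin n → MvPolynomial (Fin n) ℂ) →ₗ[MvPolynomial (Fin n) ℂ] MvPolynomial (Fin n) ℂ where
  toFun ζ := ∑ i, ζ i * pderiv i f
  map_add' ζ η := by simp [add_mul, Finset.sum_add_distrib]
  map_smul' c ζ := by simp [Finset.mul_sum, mul_assoc]

/-- The Jacobian ideal of `f`, generated by its partial derivatives. -/
noncomputable def jacobianIdeal (f : MvPolynomial (Fin n) ℂ) : Ideal (MvPolynomial (Fin n) ℂ) :=
  Ideal.span {p | ∃ i, p = pderiv i f}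

/-- The logarithmic tangent space of `V = f⁻¹(0)` at `x`: the set of values at `x` of
vector fields `ζ` tangent to `V`, i.e. with `ζ·f ∈ (f)`. -/
def logTangent (f : MvPolynomial (Fin n) ℂ) (x : Fin n → ℂ) : Set (Fin n → ℂ) :=
  {v | ∃ ζ ∈ Submodule.comap (applyVF n f) (Ideal.span {f}),
    (fun i => eval x (ζ i)) = v}

/-- The set of values at `x` of vector fields annihilating `g`. -/
def derlogEval (g : MvPolynomial (Fin n) ℂ) (x : Fin n → ℂ) : Set (Fin n → ℂ) :=
  {v | ∃ ζ ∈ LinearMap.ker (applyVF n g), (fun i => eval x (ζ i)) = v}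

lemma applyVF_apply (f : MvPolynomial (Fin n) ℂ) (ζ : Fin n → MvPolynomial (Fin n) ℂ) :
    applyVF n f ζ = ∑ i, ζ i * pderiv i f := rfl

lemma applyVF_mul (u f : MvPolynomial (Fin n) ℂ) (ζ : Fin n → MvPolynomial (Fin n) ℂ) :
    applyVF n (u * f) ζ = u * applyVF n f ζ + f * applyVF n u ζ := by
  simp only [applyVF_apply, Finset.mul_sum, ← Finset.sum_add_distrib]
  refine Finset.sum_congr rfl fun i _ => ?_
  rw [pderiv_mul]; ring

lemma exists_chi (f : MvPolynomial (Fin n) ℂ) (x : Fin n → ℂ)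
    (hmx : f ∈ RingHom.ker (eval x : MvPolynomial (Fin n) ℂ →+* ℂ) * jacobianIdeal n f) :
    ∃ χ : Fin n → MvPolynomial (Fin n) ℂ, applyVF n f χ = f ∧ ∀ i, eval x (χ i) = 0 := by
  set K : Submodule (MvPolynomial (Fin n) ℂ) (Fin n → MvPolynomial (Fin n) ℂ) :=
    { carrier := {χ | ∀ i, eval x (χ i) = 0}
      add_mem' := by intro a b ha hb i; simp [ha i, hb i]
      zero_mem' := by intro i; simp
      smul_mem' := by intro c a ha i; simp [ha i] } with hK
  have hsub : RingHom.ker (eval x : MvPolynomial (Fin n) ℂ →+* ℂ) * jacobianIdeal n f ≤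
      Submodule.map (applyVF n f) K := by
    rw [Ideal.mul_le]
    intro r hr s hs
    have hs' : s ∈ Submodule.map (applyVF n f) ⊤ := by
      have hJ : jacobianIdeal n f ≤ Submodule.map (applyVF n f) ⊤ := by
        rw [jacobianIdeal, Ideal.span_le]
        rintro p ⟨i, rfl⟩
        refine ⟨Pi.single i 1, trivial, ?_⟩
        simp [applyVF_apply, Pi.single_apply, Finset.sum_ite_eq']
      exact hJ hs
    obtain ⟨ζ, -, rfl⟩ := hs'
    refine ⟨r • ζ, ?_, ?_⟩
    · intro i
      simp [Pi.smul_apply, smul_eq_mul, RingHom.mem_ker.mp hr]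
    · simp [map_smul, smul_eq_mul]
  obtain ⟨χ, hχK, hχ⟩ := hsub hmx
  exact ⟨χ, hχ, hχK⟩

/-- **Local quasihomogeneity makes the evaluated annihilator independent of the
equation.**  If `f ∈ m_x·J_f`, then the logarithmic tangent space
`T^{log}_x V = {ζ(x) : ζ tangent to V}` equals `Der(−log(uf))(x)` — the evaluation at
`x` of the vector fields annihilating `uf` — for every choice `uf` of equation for `V`
(`u` a unit at `x`, i.e. `u(x) ≠ 0`). -/
theorem logTangent_eq_derlogEval_of_mem
    (f : MvPolynomial (Fin n) ℂ) (x : Fin n → ℂ)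
    (hx : eval x f = 0)
    (hmx : f ∈ RingHom.ker (eval x : MvPolynomial (Fin n) ℂ →+* ℂ) * jacobianIdeal n f) :
    ∀ u : MvPolynomial (Fin n) ℂ, eval x u ≠ 0 →
      logTangent n f x = derlogEval n (u * f) x := by
  obtain ⟨χ, hχf, hχx⟩ := exists_chi n f x hmx
  intro u hu
  ext v
  constructor
  · rintro ⟨ζ, hζ, rfl⟩
    rw [Submodule.mem_comap, Ideal.mem_span_singleton] at hζ
    obtain ⟨g, hg⟩ := hζ
    set w : MvPolynomial (Fin n) ℂ := u + applyVF n u χ with hw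
    have hwx : eval x w = eval x u := by
      simp [hw, applyVF_apply, map_sum, hχx]
    set t : MvPolynomial (Fin n) ℂ := u * g + applyVF n u ζ with ht
    refine ⟨(C ((eval x u)⁻¹) : MvPolynomial (Fin n) ℂ) • (w • ζ - t • χ), ?_, ?_⟩
    · rw [LinearMap.mem_ker]
      have h1 : applyVF n (u * f) ζ = f * t := by
        rw [applyVF_mul, hg, ht]; ring
      have h2 : applyVF n (u * f) χ = f * w := by
        rw [applyVF_mul, hχf, hw]; ring
      rw [map_smul, map_sub, map_smul, map_smul, h1, h2]
      simp only [smul_eq_mul]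
      ring
    · funext i
      simp only [Pi.smul_apply, Pi.sub_apply, smul_eq_mul, map_mul, map_sub, eval_C,
        hχx i, hwx, mul_zero, sub_zero]
      field_simp
  · rintro ⟨η, hη, rfl⟩
    rw [LinearMap.mem_ker] at hη
    rw [applyVF_mul] at hη
    have key : u * applyVF n f η = f * (-applyVF n u η) := by linear_combination hη
    refine ⟨(C ((eval x u)⁻¹) : MvPolynomial (Fin n) ℂ) • (u • η), ?_, ?_⟩
    · rw [Submodule.mem_comap, Ideal.mem_span_singleton, map_smul, map_smul]
      refine ⟨C ((eval x u)⁻¹) * (-applyVF n u η), ?_⟩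
      rw [smul_eq_mul, smul_eq_mul, key]; ring
    · funext i
      simp only [Pi.smul_apply, smul_eq_mul, map_mul, eval_C]
      field_simp
end

section
/- Let S(x) = diag(x^{a₁}, …, x^{aₙ}) with 0 ≤ a₁ ≤ ⋯ ≤ aₙ integers, aₙ ≥ 1. Then the Sl_n-symmetric Tjurina number τ_ss(S) = dim_ℂ symₙ(ℂ[[x]]) / ( tS(Θ) + {AᵀS + SA : A ∈ slₙ(ℂ[[x]])} ) equals ∑_{i=1}^{n}(n−i+1)aᵢ − 1, and moreover τ_ss(S) = μ(det S) + β₀ (with μ(det S) = ∑aᵢ − 1 and β₀ = ∑_{i<n} aᵢ) holds if and only if the corank of S(0) is at most 2, i.e., a_{n−2} = 0. -/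
set_option synthInstance.maxHeartbeats 1000000

open PowerSeries Matrix

noncomputable section

variable (n : ℕ)

/-- The submodule of symmetric `n×n` matrices over `ℂ[[x]]`. -/
def symSub : Submodule (PowerSeries ℂ) (Matrix (Fin n) (Fin n) (PowerSeries ℂ)) where
  carrier := {M | M.transpose = M}
  add_mem' hA hB := by simp_all [Matrix.transpose_add]
  zero_mem' := by simp
  smul_mem' c A hA := by simp_all [Matrix.transpose_smul]

/-- The infinitesimal action `A ↦ AᵀS + SA` of matrices on the family `S`. -/
def slAction (S : Matrix (Fin n) (Fin n) (PowerSeries ℂ)) :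
    Matrix (Fin n) (Fin n) (PowerSeries ℂ) →ₗ[PowerSeries ℂ]
      Matrix (Fin n) (Fin n) (PowerSeries ℂ) where
  toFun A := A.transpose * S + S * A
  map_add' A B := by
    simp [Matrix.transpose_add, Matrix.add_mul, Matrix.mul_add]; abel
  map_smul' c A := by
    simp [Matrix.transpose_smul, Matrix.smul_mul, Matrix.mul_smul]

/-- The extended tangent space to the `Sl_n`-symmetric equivalence orbit of the family
`S`: the `ℂ[[x]]`-module generated by `dS/dx` together with `{AᵀS + SA : tr A = 0}`. -/
def tangentSS (S : Matrix (Fin n) (Fin n) (PowerSeries ℂ)) :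
    Submodule (PowerSeries ℂ) (Matrix (Fin n) (Fin n) (PowerSeries ℂ)) :=
  Submodule.span (PowerSeries ℂ)
      {Matrix.of fun i j => PowerSeries.derivativeFun (S i j)} ⊔
    Submodule.map (slAction n S)
      (LinearMap.ker (Matrix.traceLinearMap (Fin n) (PowerSeries ℂ) (PowerSeries ℂ)))

/-- The `Sl_n`-symmetric Tjurina number of `S`: the codimension of the extended tangent
space inside the symmetric matrices. -/
def tauSS (S : Matrix (Fin n) (Fin n) (PowerSeries ℂ)) : ℕ :=
  Module.finrank ℂ
    ((symSub n) ⧸ Submodule.comap (symSub n).subtype (tangentSS n S))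

end

set_option maxHeartbeats 1000000

noncomputable section

namespace TauAux

noncomputable section

lemma derivX (m : ℕ) :
    derivativeFun ((X : PowerSeries ℂ) ^ m) = (m : PowerSeries ℂ) * X ^ (m - 1) := by
  ext k
  rw [show derivativeFun ((X : PowerSeries ℂ) ^ m) = derivative ℂ (X ^ m) from rfl,
    coeff_derivative, ← map_natCast (C (R := ℂ)) m, coeff_C_mul]
  simp only [coeff_X_pow]
  rcases Nat.eq_zero_or_pos m with hm | hm
  · subst hm; simp
  · by_cases h : k + 1 = m
    · rw [if_pos h, if_pos (by omega)]
      push_cast [← h]; ring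
    · rw [if_neg h, if_neg (by omega), zero_mul, mul_zero]

def divX (m : ℕ) (f : PowerSeries ℂ) : PowerSeries ℂ := mk fun k => coeff (k + m) f

lemma X_pow_mul_divX {m : ℕ} {f : PowerSeries ℂ} (h : ∀ k < m, coeff k f = 0) :
    (X : PowerSeries ℂ) ^ m * divX m f = f := by
  ext k
  rw [coeff_X_pow_mul']
  split_ifs with hk
  · rw [divX, coeff_mk, Nat.sub_add_cancel hk]
  · exact (h k (by omega)).symm

variable (n : ℕ) (a : Fin n → ℕ)

/-- bound for entry `p` -/
def bnd (p : Fin n × Fin n) : ℕ := if p.1 ≤ p.2 then a p.1 else 0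

/-- target space -/
abbrev V := Π p : Fin n × Fin n, Fin (bnd n a p) → ℂ

def pi0 : Matrix (Fin n) (Fin n) (PowerSeries ℂ) →ₗ[ℂ] V n a where
  toFun M := fun p k => coeff k (M p.1 p.2)
  map_add' M N := by funext p k; simp
  map_smul' c M := by funext p k; simp [Matrix.smul_apply]

lemma pi0_apply (M : Matrix (Fin n) (Fin n) (PowerSeries ℂ)) (p : Fin n × Fin n)
    (k : Fin (bnd n a p)) : pi0 n a M p k = coeff k (M p.1 p.2) := rfl

def w : V n a := fun p k => if p.1 = p.2 ∧ (k : ℕ) + 1 = a p.1 then (a p.1 : ℂ) else 0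

/-- the diagonal family -/
def Sdiag : Matrix (Fin n) (Fin n) (PowerSeries ℂ) :=
  Matrix.diagonal fun i => (X : PowerSeries ℂ) ^ a i

/-- its derivative matrix -/
def Dmat : Matrix (Fin n) (Fin n) (PowerSeries ℂ) :=
  Matrix.of fun i j => PowerSeries.derivativeFun (Sdiag n a i j)

lemma Dmat_apply (i j : Fin n) :
    Dmat n a i j = if i = j then (a i : PowerSeries ℂ) * X ^ (a i - 1) else 0 := by
  simp only [Dmat, Sdiag, Matrix.of_apply, Matrix.diagonal_apply]
  split_ifs with h
  · exact derivX (a i)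
  · ext k; rw [show derivativeFun (0 : PowerSeries ℂ) = derivative ℂ 0 from rfl]; simp

lemma pi0_smul_Dmat (f : PowerSeries ℂ) :
    pi0 n a (f • Dmat n a) = (constantCoeff f) • w n a := by
  funext p k
  have hk := k.isLt
  simp only [pi0, LinearMap.coe_mk, AddHom.coe_mk, Matrix.smul_apply, smul_eq_mul,
    Pi.smul_apply, w, smul_eq_mul]
  rw [Dmat_apply]
  by_cases h : p.1 = p.2
  · rw [if_pos h]
    have hb : bnd n a p = a p.1 := by simp [bnd, h.le]
    have hk' : (k : ℕ) < a p.1 := by omega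
    rw [← map_natCast (C (R := ℂ)) (a p.1),
      show f * (C (a p.1 : ℂ) * X ^ (a p.1 - 1)) = C (a p.1 : ℂ) * f * X ^ (a p.1 - 1) by
        ring,
      coeff_mul_X_pow', coeff_C_mul]
    by_cases h2 : (k : ℕ) + 1 = a p.1
    · rw [if_pos (by omega), if_pos ⟨h, h2⟩]
      have : (k : ℕ) - (a p.1 - 1) = 0 := by omega
      rw [this, coeff_zero_eq_constantCoeff]
      ring
    · rw [if_neg (by omega), if_neg (by tauto), mul_zero]
  · rw [if_neg h, mul_zero, map_zero, if_neg (by tauto), mul_zero]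

lemma pi0_slAction (ha : Monotone a) (A : Matrix (Fin n) (Fin n) (PowerSeries ℂ)) :
    pi0 n a (slAction n (Sdiag n a) A) = 0 := by
  funext p k
  have hk := k.isLt
  by_cases h : p.1 ≤ p.2
  case neg => exact absurd hk (by simp [bnd, h])
  have hb : bnd n a p = a p.1 := if_pos h
  have hk' : (k : ℕ) < a p.1 := by omega
  have hle : a p.1 ≤ a p.2 := ha h
  rw [Pi.zero_apply, Pi.zero_apply, pi0_apply]
  simp only [slAction, LinearMap.coe_mk, AddHom.coe_mk, Sdiag, Matrix.add_apply,
    Matrix.mul_diagonal, Matrix.diagonal_mul, Matrix.transpose_apply]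
  rw [map_add, coeff_mul_X_pow', coeff_X_pow_mul', if_neg (by omega), if_neg (by omega),
    add_zero]

def lift (v : V n a) : Matrix (Fin n) (Fin n) (PowerSeries ℂ) :=
  Matrix.of fun i j =>
    mk fun m =>
      if h : m < bnd n a (min i j, max i j) then v (min i j, max i j) ⟨m, h⟩ else 0

lemma lift_symm (v : V n a) : (lift n a v)ᵀ = lift n a v := by
  funext i j
  have hpair : ((j ⊓ i : Fin n), (j ⊔ i : Fin n)) = (i ⊓ j, i ⊔ j) := by
    rw [min_comm, max_comm]
  show lift n a v j i = lift n a v i j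
  simp only [lift, Matrix.of_apply]
  rw [hpair]

lemma pi0_lift (v : V n a) : pi0 n a (lift n a v) = v := by
  funext p k
  have hk := k.isLt
  by_cases h : p.1 ≤ p.2
  case neg => exact absurd hk (by simp [bnd, h])
  have hpair : ((p.1 ⊓ p.2 : Fin n), (p.1 ⊔ p.2 : Fin n)) = p := by
    rw [min_eq_left h, max_eq_right h]
  rw [pi0_apply]
  simp only [lift, Matrix.of_apply]
  rw [hpair, coeff_mk, dif_pos hk]

lemma coeff_Dmat (i j : Fin n) (k : ℕ) (hk : k < a i) :
    coeff k (Dmat n a i j) = if i = j ∧ k + 1 = a i then (a i : ℂ) else 0 := by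
  rw [Dmat_apply]
  by_cases h : i = j
  · rw [if_pos h, ← map_natCast (C (R := ℂ)) (a i), coeff_C_mul, coeff_X_pow]
    by_cases h2 : k + 1 = a i
    · rw [if_pos (by omega), if_pos ⟨h, h2⟩, mul_one]
    · rw [if_neg (by omega), if_neg (by tauto), mul_zero]
  · rw [if_neg h, map_zero, if_neg (by tauto)]

lemma divX_zero' (f : PowerSeries ℂ) : divX 0 f = f := by
  ext k; simp [divX]

lemma tangent_sub_ker (ha : Monotone a) {M : Matrix (Fin n) (Fin n) (PowerSeries ℂ)}
    (hM : M ∈ tangentSS n (Sdiag n a)) :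
    pi0 n a M ∈ Submodule.span ℂ {w n a} := by
  rcases Submodule.mem_sup.mp hM with ⟨y, hy, z, hz, rfl⟩
  rcases Submodule.mem_span_singleton.mp hy with ⟨f, rfl⟩
  rcases hz with ⟨A, hA, rfl⟩
  have hD : (Matrix.of fun i j => PowerSeries.derivativeFun (Sdiag n a i j)) = Dmat n a := rfl
  rw [map_add, pi0_slAction n a ha, add_zero, hD, pi0_smul_Dmat]
  exact Submodule.smul_mem _ _ (Submodule.mem_span_singleton_self _)

lemma ker_sub_tangent (ha : Monotone a) (hne : ∃ i, a i ≠ 0)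
    {M : Matrix (Fin n) (Fin n) (PowerSeries ℂ)} (hsym : Mᵀ = M)
    (h : pi0 n a M ∈ Submodule.span ℂ {w n a}) : M ∈ tangentSS n (Sdiag n a) := by
  rcases Submodule.mem_span_singleton.mp h with ⟨c, hc⟩
  set N : Matrix (Fin n) (Fin n) (PowerSeries ℂ) := M - (C c) • Dmat n a with hNdef
  have hNcoeff : ∀ i j : Fin n, i ≤ j → ∀ k < a i, coeff k (N i j) = 0 := by
    intro i j hij k hk
    have hb : bnd n a (i, j) = a i := if_pos hij
    have hMc : coeff k (M i j) = c * (if i = j ∧ k + 1 = a i then (a i : ℂ) else 0) := by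
      have := congrFun (congrFun hc (i, j)) ⟨k, by omega⟩
      simpa [pi0, w] using this.symm
    simp only [hNdef, Matrix.sub_apply, Matrix.smul_apply, map_sub, smul_eq_mul,
      coeff_C_mul, hMc, coeff_Dmat n a i j k hk, sub_self]
  have hNsym : ∀ i j : Fin n, N j i = N i j := by
    intro i j
    have hM : M j i = M i j := by rw [← Matrix.transpose_apply M i j, hsym]
    by_cases hij : i = j
    · subst hij; rfl
    · simp only [hNdef, Matrix.sub_apply, Matrix.smul_apply, hM,
        Dmat_apply, if_neg hij, if_neg (Ne.symm hij)]
  -- the division data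
  set g : Fin n → PowerSeries ℂ := fun i => divX (a i) (N i i) with hg
  have hgX : ∀ i, (X : PowerSeries ℂ) ^ a i * g i = N i i := fun i =>
    X_pow_mul_divX (hNcoeff i i le_rfl)
  set s : ℕ := ∑ i, a i with hs
  have hs0 : (s : ℂ) ≠ 0 := by
    obtain ⟨i0, hi0⟩ := hne
    have : s ≠ 0 := by
      intro h0
      exact hi0 ((Finset.sum_eq_zero_iff).mp h0 i0 (Finset.mem_univ _))
    exact_mod_cast this
  set u : PowerSeries ℂ := (C (s : ℂ)⁻¹) * ∑ i, g i with hu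
  set cd : Fin n → PowerSeries ℂ := fun i => (C (2⁻¹ : ℂ)) * (g i - u * (a i : ℕ)) with hcd
  set A : Matrix (Fin n) (Fin n) (PowerSeries ℂ) :=
    Matrix.of fun i j => if i = j then cd i else if i < j then divX (a i) (N i j) else 0
    with hA
  have htrace : Matrix.trace A = 0 := by
    have hsum : ∑ i, u * ((a i : ℕ) : PowerSeries ℂ) = ∑ i, g i := by
      rw [← Finset.mul_sum, hu]
      rw [show ∑ i, ((a i : ℕ) : PowerSeries ℂ) = ((s : ℕ) : PowerSeries ℂ) by
        rw [hs]; push_cast; ring]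
      rw [show ((s : ℕ) : PowerSeries ℂ) = C (s : ℂ) by rw [map_natCast (C (R := ℂ))]]
      rw [mul_assoc, mul_comm _ (C (s:ℂ)), ← mul_assoc, ← _root_.map_mul,
        inv_mul_cancel₀ hs0, RingHom.map_one, one_mul]
    have h1 : Matrix.trace A = ∑ i, cd i := by
      rw [Matrix.trace]
      refine Finset.sum_congr rfl fun i _ => ?_
      show A i i = cd i
      simp [hA]
    rw [h1]
    simp only [hcd]
    rw [← Finset.mul_sum, Finset.sum_sub_distrib, hsum, sub_self, mul_zero]
  -- the key identity
  have hkey : N = (u * X) • Dmat n a + slAction n (Sdiag n a) A := by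
    funext i j
    simp only [Matrix.add_apply, Matrix.smul_apply, smul_eq_mul, slAction,
      LinearMap.coe_mk, AddHom.coe_mk, Sdiag, Matrix.mul_diagonal, Matrix.diagonal_mul,
      Matrix.transpose_apply]
    rcases lt_trichotomy i j with hij | hij | hij
    · -- i < j
      rw [Dmat_apply, if_neg hij.ne, mul_zero, zero_add]
      simp only [hA, Matrix.of_apply, if_neg hij.ne, if_neg hij.ne',
        if_pos hij, if_neg (lt_asymm hij)]
      rw [zero_mul, zero_add, X_pow_mul_divX (hNcoeff i j hij.le)]
    · -- i = j
      subst hij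
      have hAii : A i i = cd i := by simp [hA]
      rw [Dmat_apply, if_pos rfl, hAii]
      have htwo : (C (2⁻¹ : ℂ)) + (C (2⁻¹ : ℂ)) = 1 := by
        rw [← map_add]; norm_num
      have hcdi : cd i = C (2⁻¹ : ℂ) * (g i - u * ((a i : ℕ) : PowerSeries ℂ)) := by
        rw [hcd]
      rcases Nat.eq_zero_or_pos (a i) with ha0 | ha1
      · have hg0 : g i = N i i := by
          have : g i = divX (a i) (N i i) := by rw [hg]
          rw [this, ha0, divX_zero']
        have hcd0 : cd i = C (2⁻¹ : ℂ) * N i i := by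
          rw [hcdi, ha0, Nat.cast_zero, mul_zero, sub_zero, hg0]
        rw [hcd0, ha0]
        simp only [Nat.cast_zero, zero_mul, mul_zero, zero_add, pow_zero, mul_one, one_mul]
        calc N i i = (C (2⁻¹:ℂ) + C (2⁻¹:ℂ)) * N i i := by rw [htwo, one_mul]
          _ = C (2⁻¹:ℂ) * N i i + C (2⁻¹:ℂ) * N i i := by ring
      · have hX : (X : PowerSeries ℂ) ^ a i = X * X ^ (a i - 1) := by
          rw [← pow_succ']; congr 1; omega
        have h2 : cd i * (X ^ a i) + (X ^ a i) * cd i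
            = (g i - u * ((a i : ℕ) : PowerSeries ℂ)) * X ^ a i := by
          rw [hcdi]
          calc C (2⁻¹:ℂ) * (g i - u * ((a i : ℕ) : PowerSeries ℂ)) * X ^ a i
                + X ^ a i * (C (2⁻¹:ℂ) * (g i - u * ((a i : ℕ) : PowerSeries ℂ)))
              = (C (2⁻¹:ℂ) + C (2⁻¹:ℂ))
                  * ((g i - u * ((a i : ℕ) : PowerSeries ℂ)) * X ^ a i) := by ring
            _ = _ := by rw [htwo, one_mul]
        rw [h2]
        calc N i i = g i * X ^ a i
              + (u * ((a i : ℕ) : PowerSeries ℂ)) * (X * X ^ (a i - 1) - X ^ a i) := by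
              rw [← hX, sub_self, mul_zero, add_zero, mul_comm, hgX]
          _ = u * X * (((a i : ℕ) : PowerSeries ℂ) * X ^ (a i - 1))
              + (g i - u * ((a i : ℕ) : PowerSeries ℂ)) * X ^ a i := by ring
    · -- j < i
      rw [Dmat_apply, if_neg hij.ne', mul_zero, zero_add]
      simp only [hA, Matrix.of_apply, if_neg hij.ne, if_pos hij,
        if_neg hij.ne', if_neg (lt_asymm hij)]
      rw [mul_zero, add_zero, mul_comm, X_pow_mul_divX (hNcoeff j i hij.le), hNsym]
  -- conclude
  have hM : M = (C c + u * X) • Dmat n a + slAction n (Sdiag n a) A := by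
    have hMN : M = N + (C c) • Dmat n a := by rw [hNdef]; abel
    rw [hMN, hkey]
    rw [add_smul]; abel
  rw [hM, tangentSS]
  refine Submodule.add_mem _ (Submodule.mem_sup_left ?_) (Submodule.mem_sup_right ?_)
  · exact Submodule.smul_mem _ _ (Submodule.mem_span_singleton_self _)
  · exact ⟨A, htrace, rfl⟩

/-- The comparison map. -/
def piMap : ↥(symSub n) →ₗ[ℂ] (V n a ⧸ Submodule.span ℂ {w n a}) :=
  (Submodule.span ℂ {w n a}).mkQ ∘ₗ (pi0 n a) ∘ₗ ((symSub n).subtype.restrictScalars ℂ)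

lemma piMap_surjective : Function.Surjective (piMap n a) := by
  intro q
  obtain ⟨v, rfl⟩ := Submodule.mkQ_surjective _ q
  refine ⟨⟨lift n a v, lift_symm n a v⟩, ?_⟩
  simp only [piMap, LinearMap.comp_apply, LinearMap.coe_restrictScalars,
    Submodule.coe_subtype, Submodule.mkQ_apply]
  rw [pi0_lift]

lemma ker_piMap (ha : Monotone a) (hne : ∃ i, a i ≠ 0) :
    LinearMap.ker (piMap n a) =
      Submodule.restrictScalars ℂ
        (Submodule.comap (symSub n).subtype (tangentSS n (Sdiag n a))) := by
  ext M
  simp only [LinearMap.mem_ker, piMap, LinearMap.comp_apply, LinearMap.coe_restrictScalars,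
    Submodule.coe_subtype, Submodule.mkQ_apply, Submodule.Quotient.mk_eq_zero,
    Submodule.restrictScalars_mem, Submodule.mem_comap]
  constructor
  · exact fun h => ker_sub_tangent n a ha hne M.2 h
  · exact fun h => tangent_sub_ker n a ha h

lemma finrank_V : Module.finrank ℂ (V n a) = ∑ i : Fin n, (n - (i : ℕ)) * a i := by
  rw [Module.finrank_pi_fintype]
  have h1 : ∀ p : Fin n × Fin n, Module.finrank ℂ (Fin (bnd n a p) → ℂ) = bnd n a p :=
    fun p => Module.finrank_fin_fun ℂ
  rw [Finset.sum_congr rfl fun p _ => h1 p, Fintype.sum_prod_type]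
  refine Finset.sum_congr rfl fun i _ => ?_
  have h2 : ∀ j : Fin n, bnd n a (i, j) = if i ≤ j then a i else 0 := fun j => rfl
  rw [Finset.sum_congr rfl fun j _ => h2 j, Finset.sum_ite, Finset.sum_const,
    Finset.sum_const_zero, add_zero]
  have h3 : (Finset.univ.filter fun j : Fin n => i ≤ j) = Finset.Ici i := by
    ext j; simp
  rw [h3, Fin.card_Ici, smul_eq_mul]

lemma w_ne_zero (hne : ∃ i, a i ≠ 0) : w n a ≠ 0 := by
  obtain ⟨i0, hi0⟩ := hne
  intro h0
  have hb : bnd n a (i0, i0) = a i0 := if_pos le_rfl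
  have hk : a i0 - 1 < bnd n a (i0, i0) := by omega
  have hval : w n a (i0, i0) ⟨a i0 - 1, hk⟩ = ((a i0 : ℕ) : ℂ) := by
    show (if (i0 = i0) ∧ ((a i0 - 1) + 1 = a i0) then ((a i0 : ℕ) : ℂ) else 0) = _
    rw [if_pos ⟨rfl, by omega⟩]
  have hz := congrFun (congrFun h0 (i0, i0)) ⟨a i0 - 1, hk⟩
  rw [hval] at hz
  simp only [Pi.zero_apply] at hz
  exact hi0 (Nat.cast_eq_zero.mp hz)

lemma tau_formula (ha : Monotone a) (hne : ∃ i, a i ≠ 0) :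
    tauSS n (Sdiag n a) = (∑ i : Fin n, (n - (i : ℕ)) * a i) - 1 := by
  set K := Submodule.comap (symSub n).subtype (tangentSS n (Sdiag n a)) with hK
  have e1 : ((symSub n) ⧸ K) ≃ₗ[ℂ] ((symSub n : Type) ⧸ Submodule.restrictScalars ℂ K) :=
    (Submodule.Quotient.restrictScalarsEquiv ℂ K).symm
  have e2 : ((symSub n : Type) ⧸ Submodule.restrictScalars ℂ K) ≃ₗ[ℂ]
      (V n a ⧸ Submodule.span ℂ {w n a}) := by
    rw [← ker_piMap n a ha hne]
    exact LinearMap.quotKerEquivOfSurjective _ (piMap_surjective n a)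
  have hrank : tauSS n (Sdiag n a)
      = Module.finrank ℂ (V n a ⧸ Submodule.span ℂ {w n a}) := by
    rw [tauSS, ← hK]
    exact LinearEquiv.finrank_eq (e1.trans e2)
  have hq := Submodule.finrank_quotient_add_finrank (Submodule.span ℂ {w n a})
  rw [finrank_span_singleton (w_ne_zero n a hne), finrank_V] at hq
  rw [hrank]
  omega

end

end TauAux

end

/-- **Tjurina number of a diagonal symmetric family.**
Let `S(x) = diag(x^{a₁}, …, x^{aₙ})` with `0 ≤ a₁ ≤ ⋯ ≤ aₙ` integers, `aₙ ≥ 1`.  Then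
`τ_ss(S) = ∑_{i=1}^{n}(n−i+1)aᵢ − 1`, and moreover `τ_ss(S) = μ(det S) + β₀` (with
`μ(det S) = ∑aᵢ − 1` and `β₀ = ∑_{i<n} aᵢ`) holds if and only if the corank of `S(0)`
is at most `2`, i.e. `a_{n−2} = 0` (all but the last two exponents vanish). -/
theorem tauSS_diagonal (n : ℕ) (a : Fin n → ℕ)
    (ha : Monotone a) (hne : ∃ i, a i ≠ 0)
    (S : Matrix (Fin n) (Fin n) (PowerSeries ℂ))
    (hS : S = Matrix.diagonal fun i => (X : PowerSeries ℂ) ^ a i) :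
    tauSS n S = (∑ i : Fin n, (n - (i : ℕ)) * a i) - 1 ∧
    (tauSS n S = ((∑ i, a i) - 1) + (∑ i : Fin n, if (i : ℕ) < n - 1 then a i else 0) ↔
      ∀ i : Fin n, (i : ℕ) + 2 < n → a i = 0) := by
  subst hS
  have htau : tauSS n (Matrix.diagonal fun i => (X : PowerSeries ℂ) ^ a i)
      = (∑ i : Fin n, (n - (i : ℕ)) * a i) - 1 := TauAux.tau_formula n a ha hne
  refine ⟨htau, ?_⟩
  rw [htau]
  obtain ⟨i0, hi0⟩ := hne
  have hA1 : 1 ≤ ∑ i, a i := by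
    have := Finset.single_le_sum (f := a) (fun i _ => Nat.zero_le _) (Finset.mem_univ i0)
    omega
  have hterm : ∀ i : Fin n, a i + (if (i : ℕ) < n - 1 then a i else 0) ≤ (n - (i : ℕ)) * a i := by
    intro i
    have hi := i.isLt
    by_cases h : (i : ℕ) < n - 1
    · rw [if_pos h]
      have h2 : 2 ≤ n - (i : ℕ) := by omega
      calc a i + a i = 2 * a i := by ring
        _ ≤ (n - (i : ℕ)) * a i := Nat.mul_le_mul_right _ h2
    · rw [if_neg h, add_zero]
      have h1 : 1 ≤ n - (i : ℕ) := by omega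
      calc a i = 1 * a i := (one_mul _).symm
        _ ≤ (n - (i : ℕ)) * a i := Nat.mul_le_mul_right _ h1
  have hBle : (∑ i, a i) + (∑ i : Fin n, if (i : ℕ) < n - 1 then a i else 0)
      ≤ ∑ i : Fin n, (n - (i : ℕ)) * a i := by
    rw [← Finset.sum_add_distrib]
    exact Finset.sum_le_sum fun i _ => hterm i
  have key : (∑ i : Fin n, (a i + if (i : ℕ) < n - 1 then a i else 0))
        = (∑ i : Fin n, (n - (i : ℕ)) * a i)
      ↔ ∀ i ∈ Finset.univ, (a i + if (i : ℕ) < n - 1 then a i else 0) = (n - (i : ℕ)) * a i :=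
    Finset.sum_eq_sum_iff_of_le fun i _ => hterm i
  rw [Finset.sum_add_distrib] at key
  constructor
  · intro h
    have heq : (∑ i, a i) + (∑ i : Fin n, if (i : ℕ) < n - 1 then a i else 0)
        = ∑ i : Fin n, (n - (i : ℕ)) * a i := by omega
    intro i hi
    have := key.mp heq i (Finset.mem_univ i)
    have hii := i.isLt
    rw [if_pos (by omega : (i : ℕ) < n - 1)] at this
    by_contra hai
    have h3 : 3 ≤ n - (i : ℕ) := by omega
    have : 3 * a i ≤ (n - (i : ℕ)) * a i := Nat.mul_le_mul_right _ h3
    omega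
  · intro h
    have heq : ∀ i : Fin n, (a i + if (i : ℕ) < n - 1 then a i else 0)
        = (n - (i : ℕ)) * a i := by
      intro i
      have hii := i.isLt
      by_cases hc : (i : ℕ) + 2 < n
      · rw [h i hc]; simp
      · by_cases h2 : (i : ℕ) < n - 1
        · rw [if_pos h2]
          have : n - (i : ℕ) = 2 := by omega
          rw [this]; ring
        · rw [if_neg h2, add_zero]
          have : n - (i : ℕ) = 1 := by omega
          rw [this, one_mul]
    have := key.mpr fun i _ => heq i
    -- done
    omega
end
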